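/- Let F be a face of P, let J ⊆ J_F be a linear subspace with basis q₁,…,q_k, and set g := q₁² + ⋯ + q_k². If for every h ∈ J_F \ J and every ε > 0 the form g − ε h² takes a negative value somewhere on ℝ³, then {q ∈ H₂ : q² ∈ F_g} = J; in other words J = J_G for the face G := F_g, which is contained in F. -/
import Mathlib


open MvPolynomial

noncomputable section

/-- The space of ternary (3-variable) real polynomials. `H d` corresponds to the
homogeneous polynomials of degree `d` via the predicate `IsHomogeneous`. -/
abbrev MvP : Type := MvPolynomial (Fin 3) ℝ

/-- The cone `P` of nonnegative ternary quartics. -/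
def Pcone : Set MvP :=
  {f | f.IsHomogeneous 4 ∧ ∀ a : Fin 3 → ℝ, 0 ≤ eval a f}

/-- `F` is a face of the cone `P`. -/
def IsFace (F : Set MvP) : Prop :=
  F ⊆ Pcone ∧
  (∀ a ∈ F, ∀ b ∈ F, a + b ∈ F) ∧
  (∀ c : ℝ, 0 ≤ c → ∀ a ∈ F, c • a ∈ F) ∧
  (∀ a ∈ Pcone, ∀ b ∈ Pcone, a + b ∈ F → a ∈ F ∧ b ∈ F)

/-- `J_F = {q ∈ H₂ : q² ∈ F}`. -/
def Jset (F : Set MvP) : Set MvP :=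
  {q | q.IsHomogeneous 2 ∧ q ^ 2 ∈ F}

/-- `F_f = {g ∈ P : f - ε g ∈ P for some ε > 0}`, the smallest face of `P`
containing `f` as an inner point. -/
def Fface (f : MvP) : Set MvP :=
  {g ∈ Pcone | ∃ ε : ℝ, 0 < ε ∧ f - ε • g ∈ Pcone}

/-- Lemma `satcrit1`: if `g = q₁² + ⋯ + q_k²` for a basis `q₁,…,q_k` of a
subspace `J ⊆ J_F` and `g − ε h²` takes a negative value for every `h ∈ J_F \ J` and
`ε > 0`, then `J = J_G` for the face `G = F_g ⊆ F`. -/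
theorem stmt_15 (F : Set MvP) (hF : IsFace F) (J : Submodule ℝ MvP)
    (hJ : (J : Set MvP) ⊆ Jset F)
    (k : ℕ) (q : Fin k → MvP) (hq : ∀ i, q i ∈ J)
    (hspan : Submodule.span ℝ (Set.range q) = J) (hind : LinearIndependent ℝ q)
    (hneg : ∀ h ∈ Jset F, h ∉ J → ∀ ε : ℝ, 0 < ε →
      ∃ a : Fin 3 → ℝ, eval a ((∑ i, q i ^ 2) - ε • h ^ 2) < 0) :
    Jset (Fface (∑ i, q i ^ 2)) = (J : Set MvP) ∧
    Fface (∑ i, q i ^ 2) ⊆ F := by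
  obtain ⟨hFsub, hFadd, hFsmul, hFsplit⟩ := hF
  set g : MvP := ∑ i, q i ^ 2 with hg
  have hq2 : ∀ i, (q i).IsHomogeneous 2 := fun i => (hJ (hq i)).1
  have hqF : ∀ i, (q i) ^ 2 ∈ F := fun i => (hJ (hq i)).2
  have h0F : (0 : MvP) ∈ F := by
    have h := hJ J.zero_mem
    simpa using h.2
  have hgF : g ∈ F := by
    rw [hg]
    exact Finset.sum_induction _ (· ∈ F) (fun a b ha hb => hFadd a ha b hb) h0F
      (fun i _ => hqF i)
  have hghom : g.IsHomogeneous 4 := by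
    rw [hg]
    exact IsHomogeneous.sum _ _ _ (fun i _ => by
      have := (hq2 i).pow 2
      norm_num at this
      exact this)
  have hgeval : ∀ a : Fin 3 → ℝ, eval a g = ∑ i, (eval a (q i)) ^ 2 := by
    intro a
    rw [hg, map_sum]
    simp [map_pow]
  have hFaceSub : Fface g ⊆ F := by
    rintro p ⟨hpP, ε, hε, hsub⟩
    have hεpP : ε • p ∈ Pcone := by
      refine ⟨?_, fun a => ?_⟩
      · rw [show ε • p = (MvPolynomial.C ε) * p by rw [MvPolynomial.smul_eq_C_mul]]
        simpa using (isHomogeneous_C (Fin 3) ε).mul hpP.1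
      · rw [smul_eval]
        exact mul_nonneg hε.le (hpP.2 a)
    have := hFsplit _ hsub _ hεpP (by rw [sub_add_cancel]; exact hgF)
    have hεp := this.2
    have := hFsmul ε⁻¹ (by positivity) _ hεp
    rwa [smul_smul, inv_mul_cancel₀ hε.ne', one_smul] at this
  refine ⟨Set.Subset.antisymm ?_ ?_, hFaceSub⟩
  · -- Jset (Fface g) ⊆ J
    rintro h ⟨hh2, hh2F⟩
    obtain ⟨hh2P, ε, hε, hsub⟩ := hh2F
    by_contra hhJ
    have hhJF : h ∈ Jset F := ⟨hh2, hFaceSub ⟨hh2P, ε, hε, hsub⟩⟩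
    obtain ⟨a, ha⟩ := hneg h hhJF hhJ ε hε
    exact absurd (hsub.2 a) (by linarith)
  · -- J ⊆ Jset (Fface g)
    intro h hh
    have hhJF : h ∈ Jset F := hJ hh
    have hh2P : h ^ 2 ∈ Pcone := hFsub hhJF.2
    rw [← hspan] at hh
    obtain ⟨c, hc⟩ := (Submodule.mem_span_range_iff_exists_fun ℝ).mp hh
    set C : ℝ := (∑ i, c i ^ 2) + 1 with hC
    have hCpos : 0 < C := by positivity
    refine ⟨hhJF.1, hh2P, C⁻¹, by positivity, ?_, fun a => ?_⟩
    · refine (mem_homogeneousSubmodule _ _).mp (Submodule.sub_mem _ ?_ ?_)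
      · exact (mem_homogeneousSubmodule _ _).mpr hghom
      · exact Submodule.smul_mem _ _ ((mem_homogeneousSubmodule _ _).mpr hh2P.1)
    · rw [map_sub, smul_eval, map_pow]
      have hS : (0:ℝ) ≤ ∑ i, (eval a (q i)) ^ 2 :=
        Finset.sum_nonneg fun i _ => sq_nonneg _
      have heh : eval a h = ∑ i, c i * eval a (q i) := by
        rw [← hc, map_sum]
        simp [smul_eval]
      have hcs : (eval a h) ^ 2 ≤ C * ∑ i, (eval a (q i)) ^ 2 := by
        rw [heh]
        calc (∑ i, c i * eval a (q i)) ^ 2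
            ≤ (∑ i, c i ^ 2) * ∑ i, (eval a (q i)) ^ 2 :=
              Finset.sum_mul_sq_le_sq_mul_sq _ _ _
          _ ≤ C * ∑ i, (eval a (q i)) ^ 2 := by
              apply mul_le_mul_of_nonneg_right _ hS
              rw [hC]; linarith
      have := (inv_mul_le_iff₀ hCpos).mpr hcs
      rw [hgeval a]
      nlinarith [mul_le_mul_of_nonneg_left hcs (by positivity : (0:ℝ) ≤ C⁻¹),
        inv_mul_cancel₀ hCpos.ne']
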